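/- arXiv:1003.3764 — 2 statements merged into one kernel-verified Lean document; each statement's English description precedes it below -/
import Mathlib

section
/- Fix ξ ∈ ℝ³ with ξ ≠ 0 and let ζ = ζ_R + i ζ_I with ζ_R, ζ_I ∈ ℝ³. Then ζ·ζ = 0 and (ξ+ζ)·(ξ+ζ) = 0 (bilinear dot products) if and only if there exists ξ⊥ ∈ ℝ³ with ξ⊥·ξ = 0 such that ζ_R = -ξ/2 + ξ⊥, ζ_I·ξ = 0, ζ_I·ξ⊥ = 0, and |ζ_I| = |ζ_R|. -/
/-!
Write `ζ = a + i b`. The real and imaginary parts of `ζ·ζ = a·a - b·b + 2i a·b` show that `ζ` is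
null iff `|a| = |b|` and `a ⊥ b`. For null `ζ`, `(ξ+ζ)·(ξ+ζ) = ξ·ξ + 2 ξ·a + 2i ξ·b`, so `ξ+ζ` is
null as well iff `ξ ⊥ b` and `ξ·ξ + 2 ξ·a = 0`; the latter says exactly that `ξ⊥ := a + ξ/2` is
orthogonal to `ξ`, and then `b·ξ⊥ = b·a + b·ξ/2 = 0`.
-/

open Complex Matrix

section NullVectors

variable {ι : Type*} [Fintype ι]

theorem sum_mul_self_ofReal_add_I_mul (a b : ι → ℝ) :
    ∑ i, ((a i : ℂ) + I * b i) * ((a i : ℂ) + I * b i) =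
      ⟨a ⬝ᵥ a - b ⬝ᵥ b, 2 * (a ⬝ᵥ b)⟩ := by
  apply Complex.ext
  · simp [dotProduct, Complex.re_sum, Finset.sum_sub_distrib]
  · simp only [Complex.im_sum, dotProduct, Finset.mul_sum]
    exact Finset.sum_congr rfl fun i _ => by simp; ring

theorem sum_mul_self_ofReal_add_I_mul_eq_zero_iff (a b : ι → ℝ) :
    ∑ i, ((a i : ℂ) + I * b i) * ((a i : ℂ) + I * b i) = 0 ↔ a ⬝ᵥ a = b ⬝ᵥ b ∧ a ⬝ᵥ b = 0 := by
  rw [sum_mul_self_ofReal_add_I_mul, Complex.ext_iff]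
  simp [sub_eq_zero]

theorem sum_mul_self_add_ofReal_add_I_mul_eq_zero_iff (ξ a b : ι → ℝ)
    (hab : a ⬝ᵥ a = b ⬝ᵥ b ∧ a ⬝ᵥ b = 0) :
    ∑ i, ((ξ i : ℂ) + ((a i : ℂ) + I * b i)) * ((ξ i : ℂ) + ((a i : ℂ) + I * b i)) = 0 ↔
      ξ ⬝ᵥ ξ + 2 * (ξ ⬝ᵥ a) = 0 ∧ ξ ⬝ᵥ b = 0 := by
  have real_part (i : ι) : (ξ i : ℂ) + ((a i : ℂ) + I * b i) = (((ξ + a) i : ℝ) : ℂ) + I * b i := by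
    push_cast [Pi.add_apply]; ring
  simp only [real_part, sum_mul_self_ofReal_add_I_mul_eq_zero_iff, add_dotProduct, dotProduct_add,
    dotProduct_comm a ξ, hab.1, hab.2]
  constructor <;> rintro ⟨h₁, h₂⟩ <;> constructor <;> linarith

theorem exists_orthogonal_eq_neg_half_add_iff (ξ a b : ι → ℝ) :
    (a ⬝ᵥ a = b ⬝ᵥ b ∧ a ⬝ᵥ b = 0) ∧ (ξ ⬝ᵥ ξ + 2 * (ξ ⬝ᵥ a) = 0 ∧ ξ ⬝ᵥ b = 0) ↔
      ∃ p : ι → ℝ, p ⬝ᵥ ξ = 0 ∧ a = (fun i => -ξ i / 2 + p i) ∧ b ⬝ᵥ ξ = 0 ∧ b ⬝ᵥ p = 0 ∧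
        b ⬝ᵥ b = a ⬝ᵥ a := by
  constructor
  · rintro ⟨⟨hab, hab'⟩, hξa, hξb⟩
    refine ⟨a + (2⁻¹ : ℝ) • ξ, ?_, ?_, ?_, ?_, hab.symm⟩
    · rw [add_dotProduct, smul_dotProduct, dotProduct_comm]; simp only [smul_eq_mul]; linarith
    · funext i; simp only [Pi.add_apply, Pi.smul_apply, smul_eq_mul]; ring
    · rwa [dotProduct_comm]
    · rw [dotProduct_add, dotProduct_smul, dotProduct_comm, hab', dotProduct_comm, hξb]; simp
  · rintro ⟨p, hpξ, rfl, hbξ, hbp, hba⟩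
    have ha : (fun i => -ξ i / 2 + p i) = -(2⁻¹ : ℝ) • ξ + p := by
      funext i; simp only [Pi.add_apply, Pi.smul_apply, smul_eq_mul]; ring
    rw [ha] at hba ⊢
    simp only [add_dotProduct, dotProduct_add, smul_dotProduct, dotProduct_smul, smul_eq_mul,
      dotProduct_comm p ξ, dotProduct_comm b ξ, dotProduct_comm p b] at *
    refine ⟨⟨hba.symm, ?_⟩, ?_, hbξ⟩ <;> linarith

end NullVectors

theorem stmt_1_general (ξ ζR ζI : Fin 3 → ℝ) :
    ((∑ i : Fin 3, ((ζR i : ℂ) + Complex.I * ζI i) * ((ζR i : ℂ) + Complex.I * ζI i) = 0) ∧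
     (∑ i : Fin 3, ((ξ i : ℂ) + ((ζR i : ℂ) + Complex.I * ζI i)) *
        ((ξ i : ℂ) + ((ζR i : ℂ) + Complex.I * ζI i)) = 0))
    ↔ ∃ ξp : Fin 3 → ℝ,
        (∑ i : Fin 3, ξp i * ξ i) = 0 ∧
        (ζR = fun i => -ξ i / 2 + ξp i) ∧
        (∑ i : Fin 3, ζI i * ξ i) = 0 ∧
        (∑ i : Fin 3, ζI i * ξp i) = 0 ∧
        Real.sqrt (∑ i : Fin 3, ζI i ^ 2) = Real.sqrt (∑ i : Fin 3, ζR i ^ 2) := by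
  have sum_sq (v : Fin 3 → ℝ) : ∑ i, v i ^ 2 = v ⬝ᵥ v := by simp only [dotProduct, sq]
  rw [sum_mul_self_ofReal_add_I_mul_eq_zero_iff,
    and_congr_right (sum_mul_self_add_ofReal_add_I_mul_eq_zero_iff ξ ζR ζI),
    exists_orthogonal_eq_neg_half_add_iff]
  have sqrt_inj_sum_sq : √(∑ i, ζI i ^ 2) = √(∑ i, ζR i ^ 2) ↔ ζI ⬝ᵥ ζI = ζR ⬝ᵥ ζR := by
    rw [Real.sqrt_inj (by positivity) (by positivity), sum_sq, sum_sq]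
  simp only [sqrt_inj_sum_sq]
  rfl

/-- characterization of `𝒱_ξ`. For `ξ ≠ 0` and `ζ = ζ_R + iζ_I`,
`ζ·ζ = 0` and `(ξ+ζ)·(ξ+ζ) = 0` (bilinear dot products) iff there is a real
vector `ξ⊥ ⊥ ξ` with `ζ_R = -ξ/2 + ξ⊥`, `ζ_I ⊥ ξ`, `ζ_I ⊥ ξ⊥` and `|ζ_I| = |ζ_R|`. -/
theorem stmt_1 (ξ ζR ζI : Fin 3 → ℝ) (hξ : ξ ≠ 0) :
    ((∑ i : Fin 3, ((ζR i : ℂ) + Complex.I * ζI i) * ((ζR i : ℂ) + Complex.I * ζI i) = 0) ∧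
     (∑ i : Fin 3, ((ξ i : ℂ) + ((ζR i : ℂ) + Complex.I * ζI i)) *
        ((ξ i : ℂ) + ((ζR i : ℂ) + Complex.I * ζI i)) = 0))
    ↔ ∃ ξp : Fin 3 → ℝ,
        (∑ i : Fin 3, ξp i * ξ i) = 0 ∧
        (ζR = fun i => -ξ i / 2 + ξp i) ∧
        (∑ i : Fin 3, ζI i * ξ i) = 0 ∧
        (∑ i : Fin 3, ζI i * ξp i) = 0 ∧
        Real.sqrt (∑ i : Fin 3, ζI i ^ 2) = Real.sqrt (∑ i : Fin 3, ζR i ^ 2) :=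
  stmt_1_general ξ ζR ζI
end

section
/- For a two-layer radial conductivity on the unit ball (γ = γ₁ for r < r₁, γ = γ₂ = 1 for r₁ ≤ r ≤ 1), the eigenvalue of the Dirichlet-to-Neumann map on degree-l spherical harmonics (l ≥ 1) is λ_l = l − (2l+1)/(1 + C₁), where C₁ = w₁ (β_l γ₂ + γ₁)/(γ₂ − γ₁) with w₁ = r₁^{−(2l+1)} and β_l = (l+1)/l, provided γ₂ ≠ γ₁. -/
/-!
On each layer the radial equation has the solutions `r^l` and `r^{-(l+1)}`. Dividing the
continuity and flux conditions at `r₁` by `r₁^l` and `r₁^{l-1}` leaves two linear equations in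
which `r₁` enters only through `w₁ = r₁^{-(2l+1)}`; eliminating the inner coefficient gives
`A₂ = C₁ B₂`. Together with `A₂ + B₂ = 1` this yields `B₂ = 1/(1 + C₁)`, and
`λ_l = l A₂ - (l+1) B₂ = l - (2l+1) B₂`.
-/

namespace TwoLayerConductivity

variable {K : Type*} [Field K]

def coeffRatio (l : ℕ) (γ₁ γ₂ r₁ : K) : K :=
  r₁ ^ (-(2 * (l : ℤ) + 1)) * ((((l : K) + 1) / (l : K)) * γ₂ + γ₁) / (γ₂ - γ₁)

theorem zpow_neg_two_mul_add_one_mul_zpow {r : K} (hr : r ≠ 0) (l : ℕ) (k : ℤ) :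
    r ^ (-(2 * (l : ℤ) + 1)) * r ^ ((l : ℤ) - k) = r ^ (-(l + 1 + k : ℤ)) := by
  rw [← zpow_add₀ hr]
  ring_nf

theorem inner_coeff_eq_of_continuity {l : ℕ} {r A₁ A₂ B₂ : K} (hr : r ≠ 0)
    (hcont : A₁ * r ^ (l : ℤ) = A₂ * r ^ (l : ℤ) + B₂ * r ^ (-(l + 1 : ℤ))) :
    A₁ = A₂ + r ^ (-(2 * (l : ℤ) + 1)) * B₂ := by
  have hw := zpow_neg_two_mul_add_one_mul_zpow hr l 0
  simp only [sub_zero, add_zero] at hw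
  refine mul_right_cancel₀ (zpow_ne_zero (l : ℤ) hr) ?_
  rw [hcont, ← hw]
  ring

theorem outer_coeffs_relation_of_flux {l : ℕ} {γ₁ γ₂ r A₁ A₂ B₂ : K} (hr : r ≠ 0)
    (hA₁ : A₁ = A₂ + r ^ (-(2 * (l : ℤ) + 1)) * B₂)
    (hflux : γ₁ * ((l : K) * A₁ * r ^ ((l : ℤ) - 1))
      = γ₂ * ((l : K) * A₂ * r ^ ((l : ℤ) - 1) - ((l : K) + 1) * B₂ * r ^ (-(l + 2 : ℤ)))) :
    (γ₂ - γ₁) * ((l : K) * A₂)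
      = (((l : K) + 1) * γ₂ + (l : K) * γ₁) * r ^ (-(2 * (l : ℤ) + 1)) * B₂ := by
  have hw := zpow_neg_two_mul_add_one_mul_zpow hr l 1
  rw [show (l + 1 + 1 : ℤ) = l + 2 by ring] at hw
  refine mul_right_cancel₀ (zpow_ne_zero ((l : ℤ) - 1) hr) ?_
  rw [hA₁, ← hw] at hflux
  linear_combination (-1 : K) * hflux

theorem outer_coeff_eq_coeffRatio_mul {l : ℕ} {γ₁ γ₂ r A₂ B₂ : K} (hl : (l : K) ≠ 0)
    (hγ : γ₂ ≠ γ₁)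
    (hrel : (γ₂ - γ₁) * ((l : K) * A₂)
      = (((l : K) + 1) * γ₂ + (l : K) * γ₁) * r ^ (-(2 * (l : ℤ) + 1)) * B₂) :
    A₂ = coeffRatio l γ₁ γ₂ r * B₂ := by
  have hγ' : γ₂ - γ₁ ≠ 0 := sub_ne_zero.mpr hγ
  unfold coeffRatio
  field_simp
  linear_combination hrel

theorem eigenvalue_eq_of_coeff_eq_mul {n A B C : K} (hAB : A = C * B) (hsum : A + B = 1) :
    n * A - (n + 1) * B = n - (2 * n + 1) / (1 + C) := by
  have hB : (1 + C) * B = 1 := by linear_combination hsum - hAB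
  have hC : 1 + C ≠ 0 := left_ne_zero_of_mul_eq_one hB
  have hdiv : (2 * n + 1) / (1 + C) = (2 * n + 1) * B := by
    rw [div_eq_iff hC]
    linear_combination -(2 * n + 1) * hB
  rw [hdiv]
  linear_combination n * hsum

end TwoLayerConductivity

open TwoLayerConductivity in
theorem stmt_15_general (l : ℕ) (hl : 1 ≤ l) (γ₁ γ₂ r₁ : ℝ) (hγ : γ₂ ≠ γ₁)
    (hr₁0 : 0 < r₁)
    (A₁ A₂ B₂ : ℝ)
    (hcont : A₁ * r₁ ^ (l : ℤ) = A₂ * r₁ ^ (l : ℤ) + B₂ * r₁ ^ (-(l + 1 : ℤ)))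
    (hflux : γ₁ * ((l : ℝ) * A₁ * r₁ ^ ((l : ℤ) - 1))
      = γ₂ * ((l : ℝ) * A₂ * r₁ ^ ((l : ℤ) - 1) - ((l : ℝ) + 1) * B₂ * r₁ ^ (-(l + 2 : ℤ))))
    (hbdry : A₂ + B₂ = 1) :
    (l : ℝ) * A₂ - ((l : ℝ) + 1) * B₂
      = (l : ℝ) - (2 * (l : ℝ) + 1) /
          (1 + r₁ ^ (-(2 * (l : ℤ) + 1)) * ((((l : ℝ) + 1) / (l : ℝ)) * γ₂ + γ₁) / (γ₂ - γ₁)) := by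
  have hr : r₁ ≠ 0 := hr₁0.ne'
  have hl0 : (l : ℝ) ≠ 0 := Nat.cast_ne_zero.mpr (by omega)
  have hA₁ := inner_coeff_eq_of_continuity hr hcont
  have hA₂ := outer_coeff_eq_coeffRatio_mul hl0 hγ (outer_coeffs_relation_of_flux hr hA₁ hflux)
  exact eigenvalue_eq_of_coeff_eq_mul hA₂ hbdry

/-- two-layer radial conductivity on the unit ball
(`γ = γ₁` for `r < r₁`, `γ = γ₂ = 1` for `r₁ ≤ r ≤ 1`), with separated radial
solutions `R_l(r) = A₁ r^l` on the inner layer (regularity, `B₁ = 0`) and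
`R_l(r) = A₂ r^l + B₂ r^{-(l+1)}` on the outer layer. Continuity of `R_l` and of
`γ R_l'` at `r = r₁`, together with `R_l(1) = A₂ + B₂ = 1`, yields the
Dirichlet-to-Neumann eigenvalue
`λ_l = l A₂ - (l+1) B₂ = l - (2l+1)/(1 + C₁)` where
`C₁ = w₁ (β_l γ₂ + γ₁)/(γ₂ - γ₁)`, `w₁ = r₁^{-(2l+1)}`, `β_l = (l+1)/l`. -/
theorem stmt_15 (l : ℕ) (hl : 1 ≤ l) (γ₁ γ₂ r₁ : ℝ) (hγ₂ : γ₂ = 1) (hγ : γ₂ ≠ γ₁)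
    (hr₁0 : 0 < r₁) (hr₁1 : r₁ < 1)
    (A₁ A₂ B₂ : ℝ)
    (hcont : A₁ * r₁ ^ (l : ℤ) = A₂ * r₁ ^ (l : ℤ) + B₂ * r₁ ^ (-(l + 1 : ℤ)))
    (hflux : γ₁ * ((l : ℝ) * A₁ * r₁ ^ ((l : ℤ) - 1))
      = γ₂ * ((l : ℝ) * A₂ * r₁ ^ ((l : ℤ) - 1) - ((l : ℝ) + 1) * B₂ * r₁ ^ (-(l + 2 : ℤ))))
    (hbdry : A₂ + B₂ = 1) :
    (l : ℝ) * A₂ - ((l : ℝ) + 1) * B₂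
      = (l : ℝ) - (2 * (l : ℝ) + 1) /
          (1 + r₁ ^ (-(2 * (l : ℤ) + 1)) * ((((l : ℝ) + 1) / (l : ℝ)) * γ₂ + γ₁) / (γ₂ - γ₁)) :=
  stmt_15_general l hl γ₁ γ₂ r₁ hγ hr₁0 A₁ A₂ B₂ hcont hflux hbdry
end
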